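/- arXiv:2411.10767 — 2 statements merged into one kernel-verified Lean document; each statement's English description precedes it below -/
import Mathlib

section
/- Riedtmann–Peng homological formula: Let A be a finitary abelian category over a finite field and let A, B, C be objects of A. Then g^C_{AB} = (|Ext^1_A(A,B)_C| / |Hom_A(A,B)|) · a_C / (a_A · a_B), where Ext^1_A(A,B)_C denotes the subset of Ext^1_A(A,B) consisting of extension classes whose middle term is isomorphic to C. -/
/-!
STATEMENT 1 (Riedtmann–Peng homological formula).
For a finitary abelian category `A` over a finite field and objects `a b c` of `A`,
`g^c_{a b} = (|Ext¹(a,b)_c| / |Hom(a,b)|) · a_c / (a_a · a_b)`,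
where `Ext¹(a,b)_c` is the set of extension classes of `a` by `b` whose middle term is
isomorphic to `c` (encoded as the set of short exact sequences `0 → b → c → a → 0` up to
the action of automorphisms of the middle term `c`).
-/

open CategoryTheory CategoryTheory.Limits

noncomputable section

namespace GreenDH

/-- `a_X`, the order of the automorphism group of `X`. -/
def autCard {C : Type*} [Category C] (X : C) : ℕ := Nat.card (Aut X)

/-- `|Hom(X, Y)|`. -/
def homCard {C : Type*} [Category C] (X Y : C) : ℕ := Nat.card (X ⟶ Y)

/-- The Hall number `g^c_{a b}`: the number of subobjects of `c` which are isomorphic to `b`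
and whose corresponding quotient of `c` is isomorphic to `a`. -/
def hall {A : Type} [SmallCategory A] [Abelian A] (a b c : A) : ℕ :=
  Nat.card {S : Subobject c // Nonempty ((S : A) ≅ b) ∧ Nonempty ((cokernel S.arrow) ≅ a)}

/-- The set of short exact sequences `0 → b → c → a → 0` with prescribed middle term `c`. -/
def sesSet {A : Type*} [Category A] [Abelian A] (a b c : A) : Type _ :=
  {p : (b ⟶ c) × (c ⟶ a) // ∃ w : p.1 ≫ p.2 = 0, (ShortComplex.mk p.1 p.2 w).ShortExact}

/-- `Ext¹(a, b)_c`: extension classes of `a` by `b` with middle term isomorphic to `c`,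
i.e. short exact sequences `0 → b → c → a → 0` up to isomorphism of extensions
(inducing the identity on `a` and `b`). -/
def extWithMiddle {A : Type*} [Category A] [Abelian A] (a b c : A) : Type _ :=
  Quot (fun (p q : sesSet a b c) =>
    ∃ l : c ≅ c, p.1.1 ≫ l.hom = q.1.1 ∧ l.hom ≫ q.1.2 = p.1.2)

/-- `|Ext¹(a, b)_c|`. -/
def ext1CardWith {A : Type*} [Category A] [Abelian A] (a b c : A) : ℕ :=
  Nat.card (extWithMiddle a b c)

/-! Both sides count the short exact sequences `0 → b → c → a → 0` with middle term `c`.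
Sending a sequence to the image of `b → c` exhibits it as one of the `g^c_{ab}` subobjects together
with one of the `a_a · a_b` pairs of identifications of that subobject with `b` and of its quotient
with `a`. On the other hand, `Aut c` acts on the sequences with the extension classes as orbits,
and the stabilizer of `(f, g)` consists of the automorphisms `1 + g v f` with `v : a ⟶ b`, so each
orbit has `a_c / |Hom(a, b)|` elements. -/

open MulAction

theorem _root_.MulAction.card_mul_eq_card_orbitRel_quotient_mul_card {G X : Type*} [Group G]
    [MulAction G X] [Finite X] {n : ℕ} (hn : ∀ x : X, Nat.card (stabilizer G x) = n) :
    Nat.card X * n = Nat.card (orbitRel.Quotient G X) * Nat.card G := by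
  have : Fintype (orbitRel.Quotient G X) := Fintype.ofFinite _
  have horbit : ∀ x : X, Nat.card (orbit G x) * n = Nat.card G := fun x => by
    rw [← hn x, mul_comm, Nat.card_coe_set_eq, ← index_stabilizer, Subgroup.card_mul_index]
  rw [Nat.card_congr (selfEquivSigmaOrbits G X), Nat.card_sigma, Finset.sum_mul,
    Finset.sum_congr rfl fun ω _ => horbit ω.out, Finset.sum_const, Finset.card_univ,
    smul_eq_mul, ← Nat.card_eq_fintype_card]

theorem _root_.CategoryTheory.ShortComplex.ShortExact.exists_g_comp_comp_f_eq {A : Type*}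
    [Category A] [Abelian A] {S : ShortComplex A} (hS : S.ShortExact) {φ : S.X₂ ⟶ S.X₂}
    (hf : S.f ≫ φ = 0) (hg : φ ≫ S.g = 0) : ∃ v : S.X₃ ⟶ S.X₁, S.g ≫ v ≫ S.f = φ := by
  obtain ⟨u, hu⟩ := CokernelCofork.IsColimit.desc' hS.gIsCokernel φ hf
  replace hu : S.g ≫ u = φ := hu
  have := hS.epi_g
  have hug : u ≫ S.g = 0 := by rw [← cancel_epi S.g, reassoc_of% hu, hg, comp_zero]
  obtain ⟨v, hv⟩ := KernelFork.IsLimit.lift' hS.fIsKernel u hug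
  replace hv : v ≫ S.f = u := hv
  exact ⟨v, by rw [hv, hu]⟩

section Automorphisms

variable {A : Type*} [Category A]

instance {X : A} [Finite (X ⟶ X)] : Finite (Aut X) :=
  Finite.of_injective (fun l : Aut X => l.hom) fun _ _ => Aut.ext

lemma card_iso_eq_autCard_left {X Y : A} (e : X ≅ Y) : Nat.card (X ≅ Y) = autCard Y :=
  Nat.card_congr (Iso.isoCongrLeft e)

lemma card_iso_eq_autCard_right {X Y : A} (e : X ≅ Y) : Nat.card (X ≅ Y) = autCard X :=
  Nat.card_congr (Iso.isoCongrRight e.symm)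

end Automorphisms

section Extensions

variable {A : Type*} [Category A] [Abelian A] {a b c : A}

instance : MulAction (Aut c) (sesSet a b c) where
  smul l p := ⟨(p.1.1 ≫ l.hom, l.inv ≫ p.1.2), by
    obtain ⟨w, hw⟩ := p.2
    have hl : l.hom ≫ l.inv ≫ p.1.2 = p.1.2 := Iso.hom_inv_id_assoc l _
    refine ⟨by rw [Category.assoc, hl, w], ShortComplex.shortExact_of_iso ?_ hw⟩
    exact ShortComplex.isoMk (Iso.refl b) l (Iso.refl a) (by simp) (by simpa using hl)⟩
  one_smul p := by
    apply Subtype.ext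
    show (p.1.1 ≫ 𝟙 c, 𝟙 c ≫ p.1.2) = p.1
    simp
  mul_smul l m p := by
    apply Subtype.ext
    show (p.1.1 ≫ m.hom ≫ l.hom, (l.inv ≫ m.inv) ≫ p.1.2) =
      ((p.1.1 ≫ m.hom) ≫ l.hom, l.inv ≫ m.inv ≫ p.1.2)
    simp only [Category.assoc]

lemma sesSet.smul_val (l : Aut c) (p : sesSet a b c) : (l • p).1 = (p.1.1 ≫ l.hom, l.inv ≫ p.1.2) :=
  rfl

lemma sesSet.smul_eq_iff (l : Aut c) (p q : sesSet a b c) :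
    l • p = q ↔ p.1.1 ≫ l.hom = q.1.1 ∧ l.hom ≫ q.1.2 = p.1.2 := by
  refine Subtype.ext_iff.trans ?_
  rw [sesSet.smul_val, Prod.ext_iff]
  exact and_congr_right' ((Iso.inv_comp_eq l).trans eq_comm)

instance [Finite (b ⟶ c)] [Finite (c ⟶ a)] : Finite (sesSet a b c) := Subtype.finite

variable (a b c) in
def extWithMiddleEquivOrbitRelQuotient :
    extWithMiddle a b c ≃ orbitRel.Quotient (Aut c) (sesSet a b c) :=
  Quot.congrRight fun p q => by
    rw [orbitRel_apply, mem_orbit_symm, mem_orbit_iff]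
    exact exists_congr fun l => (sesSet.smul_eq_iff l p q).symm

@[simps]
def shear {f : b ⟶ c} {g : c ⟶ a} (w : f ≫ g = 0) (v : a ⟶ b) : Aut c where
  hom := 𝟙 c + g ≫ v ≫ f
  inv := 𝟙 c - g ≫ v ≫ f
  hom_inv_id := by simp [Preadditive.comp_sub, Preadditive.add_comp, reassoc_of% w]
  inv_hom_id := by simp [Preadditive.sub_comp, Preadditive.comp_add, reassoc_of% w]

lemma sesSet.card_stabilizer (p : sesSet a b c) :
    Nat.card (stabilizer (Aut c) p) = homCard a b := by
  obtain ⟨w, hw⟩ := p.2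
  have := hw.mono_f
  have := hw.epi_g
  have mem : ∀ v, shear w v ∈ stabilizer (Aut c) p := fun v =>
    (sesSet.smul_eq_iff _ p p).2 ⟨by rw [shear_hom, Preadditive.comp_add, reassoc_of% w]; simp,
      by rw [shear_hom, Preadditive.add_comp]; simp [w]⟩
  let Ψ : (a ⟶ b) → stabilizer (Aut c) p := fun v => ⟨shear w v, mem v⟩
  have hinj : Function.Injective Ψ := fun v v' h => by
    have h' : p.1.2 ≫ v ≫ p.1.1 = p.1.2 ≫ v' ≫ p.1.1 :=
      add_left_cancel (congrArg (fun l => l.1.hom) h)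
    rwa [cancel_epi, cancel_mono] at h'
  have hsurj : Function.Surjective Ψ := by
    rintro ⟨l, hl⟩
    obtain ⟨hf, hg⟩ := (sesSet.smul_eq_iff l p p).1 hl
    obtain ⟨v, hv⟩ := hw.exists_g_comp_comp_f_eq (φ := l.hom - 𝟙 c)
      (by simp [Preadditive.comp_sub, hf]) (by simp [Preadditive.sub_comp, hg])
    exact ⟨v, Subtype.ext (Aut.ext (by simp [Ψ, hv]))⟩
  exact (Nat.card_congr (Equiv.ofBijective Ψ ⟨hinj, hsurj⟩)).symm

lemma card_sesSet_mul_homCard [Finite (sesSet a b c)] :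
    Nat.card (sesSet a b c) * homCard a b = ext1CardWith a b c * autCard c := by
  rw [card_mul_eq_card_orbitRel_quotient_mul_card sesSet.card_stabilizer, ext1CardWith,
    Nat.card_congr (extWithMiddleEquivOrbitRelQuotient a b c), autCard]

lemma _root_.CategoryTheory.ShortComplex.shortExact_mk_cokernel_π {X Y : A} (m : X ⟶ Y)
    [Mono m] :
    (ShortComplex.mk m (cokernel.π m) (cokernel.condition m)).ShortExact where
  exact := ShortComplex.exact_of_g_is_cokernel _ (cokernelIsCokernel m)

variable (a b c) in
abbrev HallSubobject : Type _ :=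
  {S : Subobject c // Nonempty ((S : A) ≅ b) ∧ Nonempty (cokernel S.arrow ≅ a)}

variable (a b c) in
abbrev HallData : Type _ :=
  Σ S : HallSubobject a b c, (b ≅ (S.1 : A)) × (cokernel S.1.arrow ≅ a)

def HallData.toSesSet (x : HallData a b c) : sesSet a b c :=
  ⟨(x.2.1.hom ≫ x.1.1.arrow, cokernel.π x.1.1.arrow ≫ x.2.2.hom), by
    refine ⟨by simp, ShortComplex.shortExact_of_iso ?_
      (ShortComplex.shortExact_mk_cokernel_π x.1.1.arrow)⟩
    exact ShortComplex.isoMk x.2.1.symm (Iso.refl c) x.2.2 (by simp) (by simp)⟩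

lemma HallData.toSesSet_injective :
    Function.Injective (HallData.toSesSet (a := a) (b := b) (c := c)) := by
  rintro ⟨S, e, e'⟩ ⟨S', ee, ee'⟩ h
  obtain ⟨h1, h2⟩ := Prod.ext_iff.1 (Subtype.ext_iff.1 h)
  change e.hom ≫ S.1.arrow = ee.hom ≫ S'.1.arrow at h1
  change cokernel.π S.1.arrow ≫ e'.hom = cokernel.π S'.1.arrow ≫ ee'.hom at h2
  have hS : S = S' := by
    apply Subtype.ext
    calc S.1 = Subobject.mk (e.hom ≫ S.1.arrow) :=
          ((Subobject.mk_eq_mk_of_comm _ S.1.arrow e rfl).trans (Subobject.mk_arrow S.1)).symm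
      _ = Subobject.mk (ee.hom ≫ S'.1.arrow) :=
          Subobject.mk_eq_mk_of_comm _ _ (Iso.refl b) (by simpa using h1.symm)
      _ = S'.1 :=
          (Subobject.mk_eq_mk_of_comm _ S'.1.arrow ee rfl).trans (Subobject.mk_arrow S'.1)
  subst hS
  have he : e = ee := Iso.ext (by rwa [cancel_mono S.1.arrow] at h1)
  have he' : e' = ee' := Iso.ext (by rwa [cancel_epi (cokernel.π S.1.arrow)] at h2)
  rw [he, he']

lemma HallData.toSesSet_surjective :
    Function.Surjective (HallData.toSesSet (a := a) (b := b) (c := c)) := by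
  rintro ⟨⟨f, g⟩, w, hw⟩
  have := hw.mono_f
  let u := Subobject.underlyingIso f
  have hc : IsColimit (CokernelCofork.ofπ g _ : CokernelCofork (Subobject.mk f).arrow) :=
    isCokernelEpiComp hw.gIsCokernel u.hom (Subobject.underlyingIso_hom_comp_eq_mk f).symm
  let e' := (cokernelIsCokernel _).coconePointUniqueUpToIso hc
  refine ⟨⟨⟨Subobject.mk f, ⟨u⟩, ⟨e'⟩⟩, u.symm, e'⟩, ?_⟩
  apply Subtype.ext
  apply Prod.ext
  · exact Subobject.underlyingIso_arrow f
  · exact (cokernelIsCokernel _).comp_coconePointUniqueUpToIso_hom hc WalkingParallelPair.one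

variable (a b c) in
def hallDataEquivSesSet : HallData a b c ≃ sesSet a b c :=
  Equiv.ofBijective HallData.toSesSet ⟨HallData.toSesSet_injective, HallData.toSesSet_surjective⟩

lemma card_sesSet_eq_card_hallSubobject_mul [Finite (sesSet a b c)] :
    Nat.card (sesSet a b c) = Nat.card (HallSubobject a b c) * (autCard a * autCard b) := by
  have : Finite (HallData a b c) := (hallDataEquivSesSet a b c).finite_iff.2 inferInstance
  have : Finite (HallSubobject a b c) := Finite.of_surjective (Sigma.fst : HallData a b c → _)
    fun S => ⟨⟨S, S.2.1.some.symm, S.2.2.some⟩, rfl⟩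
  have : Fintype (HallSubobject a b c) := Fintype.ofFinite _
  have : ∀ S : HallSubobject a b c, Finite ((b ≅ (S.1 : A)) × (cokernel S.1.arrow ≅ a)) :=
    fun S => Finite.of_injective (Sigma.mk S : _ → HallData a b c) sigma_mk_injective
  have hfiber : ∀ S : HallSubobject a b c,
      Nat.card ((b ≅ (S.1 : A)) × (cokernel S.1.arrow ≅ a)) = autCard a * autCard b := fun S => by
    rw [Nat.card_prod, card_iso_eq_autCard_right S.2.1.some.symm,
      card_iso_eq_autCard_left S.2.2.some, mul_comm]
  rw [← Nat.card_congr (hallDataEquivSesSet a b c), Nat.card_sigma,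
    Finset.sum_congr rfl fun S _ => hfiber S, Finset.sum_const, Finset.card_univ, smul_eq_mul,
    ← Nat.card_eq_fintype_card]

end Extensions

theorem riedtmann_peng_formula_general
    (A : Type) [SmallCategory A] [Abelian A]
    -- finitary: finite Hom-sets and finite Ext¹-groups
    (hfinHom : ∀ X Y : A, Finite (X ⟶ Y))
    (a b c : A) :
    (hall a b c : ℚ) =
      ((ext1CardWith a b c : ℚ) / (homCard a b : ℚ)) *
        (autCard c : ℚ) / ((autCard a : ℚ) * (autCard b : ℚ)) := by
  have key : hall a b c * (autCard a * autCard b) * homCard a b =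
      ext1CardWith a b c * autCard c := by
    rw [hall, ← card_sesSet_eq_card_hallSubobject_mul, card_sesSet_mul_homCard]
  have : Nonempty (a ⟶ b) := ⟨0⟩
  have hhom : (homCard a b : ℚ) ≠ 0 := Nat.cast_ne_zero.2 Nat.card_pos.ne'
  have haut : ∀ X : A, (autCard X : ℚ) ≠ 0 := fun X => Nat.cast_ne_zero.2 Nat.card_pos.ne'
  rw [eq_div_iff (mul_ne_zero (haut a) (haut b)), div_mul_eq_mul_div, eq_div_iff hhom]
  exact_mod_cast key

/-- **Riedtmann–Peng formula.** -/
theorem riedtmann_peng_formula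
    (k : Type) [Field k] [Fintype k]
    (A : Type) [SmallCategory A] [Abelian A] [CategoryTheory.Linear k A]
    [HasExt.{0} A]
    -- finitary: finite Hom-sets and finite Ext¹-groups
    (hfinHom : ∀ X Y : A, Finite (X ⟶ Y))
    (hfinExt : ∀ X Y : A, Finite (Abelian.Ext X Y 1))
    (a b c : A) :
    (hall a b c : ℚ) =
      ((ext1CardWith a b c : ℚ) / (homCard a b : ℚ)) *
        (autCard c : ℚ) / ((autCard a : ℚ) * (autCard b : ℚ)) :=
  riedtmann_peng_formula_general A hfinHom a b c

end GreenDH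
end
end

section
/- Let A be a finitary abelian category over a finite field, t an odd positive integer, and fix objects A_1^i, A_2^i, X^i, S^i, M^i, N^i of A for each i ∈ Z_t. Let T be the set of tuples (f_1^•, g_1^•, f_2^•, g_2^•, f_3^•, g_3^•) where for each i ∈ Z_t the sequences 0 → S^i →^{f_1^i} A_2^i →^{g_1^i} N^i → 0, 0 → N^i →^{f_2^i} X^i →^{g_2^i} M^i → 0, and 0 → M^i →^{f_3^i} A_1^i →^{g_3^i} S^{i+1} → 0 are short exact in A, and let G_{M^•,N^•} be the set of 3t-periodic complexes (m^•, n^•, h^•), with components A_2^i →^{m^i} X^i →^{n^i} A_1^i →^{h^i} A_2^{i+1} for i ∈ Z_t, that are exact and satisfy Im(h^i) ≅ S^{i+1}, Ker(h^i) ≅ M^i, Coker(h^i) ≅ N^{i+1}. Then the map Φ sending (f_1^•,g_1^•,f_2^•,g_2^•,f_3^•,g_3^•) to (f_2^• g_1^•, f_3^• g_2^•, f_1^{•+1} g_3^•) is a surjection T ↠ G_{M^•,N^•}, and |T| = ∏_{i∈Z_t} g^{A_1^i}_{S^{i+1} M^i} g^{X^i}_{M^i N^i} g^{A_2^i}_{N^i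 S^i} · a_{M^i}^2 a_{N^i}^2 a_{S^i}^2 while |G_{M^•,N^•}| = ∏_{i∈Z_t} g^{A_1^i}_{S^{i+1} M^i} g^{X^i}_{M^i N^i} g^{A_2^i}_{N^i S^i} · a_{M^i} a_{N^i} a_{S^i}. -/
/-!
STATEMENT 15.
Counting triples of short exact sequences versus exact `3t`-periodic complexes.
For fixed objects `A₁^i, A₂^i, X^i, S^i, M^i, N^i` (`i ∈ Z_t`), the natural map `Φ`
from the set `T` of triples of short exact sequences to the set `G_{M,N}` of exact
`3t`-periodic complexes with prescribed images, kernels and cokernels is surjective,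
and `|T|` and `|G_{M,N}|` are given by products of Hall numbers and automorphism counts.
-/

open CategoryTheory CategoryTheory.Limits

noncomputable section

namespace GreenDH

/-- `0 ⟶ · ⟶f · ⟶g · ⟶ 0` is a short exact sequence. -/
def sesProp {A : Type} [SmallCategory A] [Abelian A] {X Y Z : A}
    (f : X ⟶ Y) (g : Y ⟶ Z) : Prop :=
  ∃ w : f ≫ g = 0, (ShortComplex.mk f g w).ShortExact

/-- the pair `(f, g)` is exact at the middle object. -/
def exactProp {A : Type} [SmallCategory A] [Abelian A] {X Y Z : A}
    (f : X ⟶ Y) (g : Y ⟶ Z) : Prop :=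
  ∃ w : f ≫ g = 0, (ShortComplex.mk f g w).Exact

variable {A : Type} [SmallCategory A] [Abelian A] {t : ℕ}

/-- A triple of short exact sequences
`0 → S^i → A₂^i → N^i → 0`, `0 → N^i → X^i → M^i → 0`, `0 → M^i → A₁^i → S^{i+1} → 0`. -/
structure TripleSES (A1 A2 X S M N : ZMod t → A) (i : ZMod t) where
  f1 : S i ⟶ A2 i
  g1 : A2 i ⟶ N i
  f2 : N i ⟶ X i
  g2 : X i ⟶ M i
  f3 : M i ⟶ A1 i
  g3 : A1 i ⟶ S (i + 1)
  ses1 : sesProp f1 g1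
  ses2 : sesProp f2 g2
  ses3 : sesProp f3 g3

/-- The set `T` of the statement. -/
def TT (A1 A2 X S M N : ZMod t → A) : Type _ := ∀ i : ZMod t, TripleSES A1 A2 X S M N i

/-- One period `A₂^i ⟶m X^i ⟶n A₁^i ⟶h A₂^{i+1}` of a `3t`-periodic complex. -/
structure RawTriple (A1 A2 X : ZMod t → A) (i : ZMod t) where
  m : A2 i ⟶ X i
  n : X i ⟶ A1 i
  h : A1 i ⟶ A2 (i + 1)

/-- `3t`-periodic sequences of composable morphisms. -/
def Raw (A1 A2 X : ZMod t → A) : Type _ := ∀ i : ZMod t, RawTriple A1 A2 X i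

/-- The set `G_{M^•,N^•}` of exact `3t`-periodic complexes with
`Im(h^i) ≅ S^{i+1}`, `Ker(h^i) ≅ M^i`, `Coker(h^i) ≅ N^{i+1}`. -/
def GSet (A1 A2 X S M N : ZMod t → A) : Set (Raw A1 A2 X) :=
  {r | (∀ i : ZMod t,
          exactProp (r i).m (r i).n ∧ exactProp (r i).n (r i).h ∧
            exactProp (r i).h (r (i + 1)).m) ∧
       (∀ i : ZMod t,
          Nonempty (Limits.image (r i).h ≅ S (i + 1)) ∧
            Nonempty (kernel (r i).h ≅ M i) ∧
            Nonempty (cokernel (r i).h ≅ N (i + 1)))}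

/-- The map `Φ` sending a triple of short exact sequences to the associated
`3t`-periodic complex `(f₂ g₁, f₃ g₂, f₁ g₃)`. -/
def Phi (A1 A2 X S M N : ZMod t → A) (p : TT A1 A2 X S M N) : Raw A1 A2 X :=
  fun i => ⟨(p i).g1 ≫ (p i).f2, (p i).g2 ≫ (p i).f3, (p i).g3 ≫ (p (i + 1)).f1⟩

/-!
A triple of short exact sequences glues, by composing each epimorphism with the following
monomorphism, into an exact periodic complex; conversely the image factorisations of the maps
of an exact periodic complex split it back into short exact sequences, so `Φ` is onto `G`.
Two triples have the same image under `Φ` exactly when they differ by automorphisms of the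
objects `M^i, N^i, S^i` (epi-mono factorisations, kernels and cokernels are unique up to unique
isomorphism), and these automorphisms act freely because the first map of a short exact
sequence is a monomorphism. Hence `|T| = |G| ∏ a_{M^i} a_{N^i} a_{S^i}`. The same free action with
orbits the subobjects `Im f ⊆ C` shows that the short exact sequences `0 → B → C → Z → 0`
number `g^C_{Z B} a_B a_Z`, which gives `|T|`.
-/

section ShortExact

variable {X' X Y Z Z' : A}

lemma sesProp.mono {f : X ⟶ Y} {g : Y ⟶ Z} (h : sesProp f g) : Mono f :=
  h.choose_spec.mono_f

lemma sesProp.epi {f : X ⟶ Y} {g : Y ⟶ Z} (h : sesProp f g) : Epi g :=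
  h.choose_spec.epi_g

lemma sesProp.exactProp {f : X ⟶ Y} {g : Y ⟶ Z} (h : sesProp f g) : exactProp f g :=
  ⟨h.choose, h.choose_spec.exact⟩

lemma sesProp_of_exactProp {f : X ⟶ Y} {g : Y ⟶ Z} [Mono f] [Epi g] (h : exactProp f g) :
    sesProp f g :=
  ⟨h.choose, { exact := h.choose_spec }⟩

lemma exactProp_kernel (g : Y ⟶ Z) : exactProp (kernel.ι g) g :=
  ⟨kernel.condition g, ShortComplex.exact_kernel g⟩

lemma exactProp_cokernel (f : X ⟶ Y) : exactProp f (cokernel.π f) :=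
  ⟨cokernel.condition f, ShortComplex.exact_cokernel f⟩

lemma sesProp_cokernel (f : X ⟶ Y) [Mono f] : sesProp f (cokernel.π f) :=
  sesProp_of_exactProp (exactProp_cokernel f)

lemma exactProp_epi_comp_iff (e : X' ⟶ X) [Epi e] (f : X ⟶ Y) (g : Y ⟶ Z) :
    exactProp (e ≫ f) g ↔ exactProp f g := by
  have hw : (e ≫ f) ≫ g = 0 ↔ f ≫ g = 0 := by
    rw [Category.assoc, ← cancel_epi e, comp_zero]
  constructor <;> rintro ⟨w, hS⟩
  · exact ⟨hw.1 w, (ShortComplex.exact_iff_of_epi_of_isIso_of_mono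
      (S₁ := .mk (e ≫ f) g w) (S₂ := .mk f g (hw.1 w)) { τ₁ := e, τ₂ := 𝟙 _, τ₃ := 𝟙 _ }).1 hS⟩
  · exact ⟨hw.2 w, (ShortComplex.exact_iff_of_epi_of_isIso_of_mono
      (S₁ := .mk (e ≫ f) g (hw.2 w)) (S₂ := .mk f g w) { τ₁ := e, τ₂ := 𝟙 _, τ₃ := 𝟙 _ }).2 hS⟩

lemma exactProp_comp_mono_iff (f : X ⟶ Y) (g : Y ⟶ Z) (m : Z ⟶ Z') [Mono m] :
    exactProp f (g ≫ m) ↔ exactProp f g := by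
  have hw : f ≫ g ≫ m = 0 ↔ f ≫ g = 0 := by
    rw [← Category.assoc, ← cancel_mono m, zero_comp]
  constructor <;> rintro ⟨w, hS⟩
  · exact ⟨hw.1 w, (ShortComplex.exact_iff_of_epi_of_isIso_of_mono
      (S₁ := .mk f g (hw.1 w)) (S₂ := .mk f (g ≫ m) w) { τ₁ := 𝟙 _, τ₂ := 𝟙 _, τ₃ := m }).2 hS⟩
  · exact ⟨hw.2 w, (ShortComplex.exact_iff_of_epi_of_isIso_of_mono
      (S₁ := .mk f g w) (S₂ := .mk f (g ≫ m) (hw.2 w)) { τ₁ := 𝟙 _, τ₂ := 𝟙 _, τ₃ := m }).1 hS⟩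

lemma exactProp_epi_comp_comp_mono_iff (e : X' ⟶ X) [Epi e] (f : X ⟶ Y) (g : Y ⟶ Z)
    (m : Z ⟶ Z') [Mono m] : exactProp (e ≫ f) (g ≫ m) ↔ exactProp f g := by
  rw [exactProp_epi_comp_iff, exactProp_comp_mono_iff]

lemma sesProp.iso_comp {f : X ⟶ Y} {g : Y ⟶ Z} (h : sesProp f g) (a : X' ≅ X) :
    sesProp (a.hom ≫ f) g := by
  have := h.mono; have := h.epi
  exact sesProp_of_exactProp ((exactProp_epi_comp_iff _ _ _).2 h.exactProp)

lemma sesProp.comp_iso {f : X ⟶ Y} {g : Y ⟶ Z} (h : sesProp f g) (c : Z ≅ Z') :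
    sesProp f (g ≫ c.hom) := by
  have := h.mono; have := h.epi
  exact sesProp_of_exactProp ((exactProp_comp_mono_iff _ _ _).2 h.exactProp)

lemma sesProp.exists_iso_left {f : X ⟶ Y} {f' : X' ⟶ Y} {g : Y ⟶ Z} (h : sesProp f g)
    (h' : sesProp f' g) : ∃ e : X ≅ X', f' = e.inv ≫ f := by
  obtain ⟨_, hS⟩ := h
  obtain ⟨_, hS'⟩ := h'
  exact ⟨_, (IsLimit.conePointUniqueUpToIso_inv_comp hS.fIsKernel hS'.fIsKernel
    WalkingParallelPair.zero).symm⟩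

lemma sesProp.exists_iso_right {f : X ⟶ Y} {g : Y ⟶ Z} {g' : Y ⟶ Z'} (h : sesProp f g)
    (h' : sesProp f g') : ∃ e : Z ≅ Z', g' = g ≫ e.hom := by
  obtain ⟨_, hS⟩ := h
  obtain ⟨_, hS'⟩ := h'
  exact ⟨_, (IsColimit.comp_coconePointUniqueUpToIso_hom hS.gIsCokernel hS'.gIsCokernel
    WalkingParallelPair.one).symm⟩

lemma exists_iso_of_epi_comp_mono_eq {N N' : A} {g : X ⟶ N} {f : N ⟶ Y} {g' : X ⟶ N'}
    {f' : N' ⟶ Y} [Epi g] [Mono f] [Epi g'] [Mono f'] (hc : g ≫ f = g' ≫ f') :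
    ∃ e : N ≅ N', g' = g ≫ e.hom ∧ f' = e.inv ≫ f := by
  -- `g` and `g'` are both cokernels of the kernel of `g ≫ f`
  have hker : ∀ {N'' : A} (g'' : X ⟶ N'') (f'' : N'' ⟶ Y) [Epi g''] [Mono f''],
      g'' ≫ f'' = g ≫ f → sesProp (kernel.ι (g ≫ f)) g'' := fun g'' f'' _ _ hc' =>
    sesProp_of_exactProp
      ((exactProp_comp_mono_iff _ g'' f'').1 (by rw [hc']; exact exactProp_kernel _))
  obtain ⟨e, he⟩ := (hker g f rfl).exists_iso_right (hker g' f' hc.symm)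
  refine ⟨e, he, ?_⟩
  rw [← cancel_epi g', ← hc, he, Category.assoc, e.hom_inv_id_assoc]

lemma nonempty_image_kernel_cokernel_iso {K P S N : A} {f : K ⟶ P} {g : P ⟶ S} {f' : S ⟶ Y}
    {g' : Y ⟶ N} (h : sesProp f g) (h' : sesProp f' g') :
    Nonempty (image (g ≫ f') ≅ S) ∧ Nonempty (kernel (g ≫ f') ≅ K) ∧
      Nonempty (cokernel (g ≫ f') ≅ N) := by
  have := h.epi
  have := h'.mono
  obtain ⟨eS, -, -⟩ := exists_iso_of_epi_comp_mono_eq (image.fac (g ≫ f'))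
  obtain ⟨eK, -⟩ := h.exists_iso_left
    (sesProp_of_exactProp ((exactProp_comp_mono_iff _ _ f').1 (exactProp_kernel (g ≫ f'))))
  obtain ⟨eN, -⟩ := h'.exists_iso_right
    (sesProp_of_exactProp ((exactProp_epi_comp_iff g _ _).1 (exactProp_cokernel (g ≫ f'))))
  exact ⟨⟨eS⟩, ⟨eK.symm⟩, ⟨eN.symm⟩⟩

lemma exists_factorization_through_kernel {K : A} {n : X ⟶ Y} {h : Y ⟶ Z}
    (hex : exactProp n h) (μ : kernel h ≅ K) :
    ∃ (g : X ⟶ K) (f : K ⟶ Y), Epi g ∧ Mono f ∧ exactProp f h ∧ g ≫ f = n := by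
  obtain ⟨w, hS⟩ := hex
  have := hS.epi_kernelLift
  exact ⟨kernel.lift h n w ≫ μ.hom, μ.inv ≫ kernel.ι h, epi_comp _ _, mono_comp _ _,
    (exactProp_epi_comp_iff _ _ _).2 (exactProp_kernel h), by simp⟩

lemma exists_factorization_through_cokernel {N : A} {h : X ⟶ Y} {m : Y ⟶ Z}
    (hex : exactProp h m) (ν : cokernel h ≅ N) :
    ∃ (g : Y ⟶ N) (f : N ⟶ Z), Epi g ∧ Mono f ∧ exactProp h g ∧ g ≫ f = m := by
  obtain ⟨w, hS⟩ := hex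
  have := hS.mono_cokernelDesc
  exact ⟨cokernel.π h ≫ ν.hom, ν.inv ≫ cokernel.desc h m w, epi_comp _ _, mono_comp _ _,
    (exactProp_comp_mono_iff _ _ _).2 (exactProp_cokernel h), by simp⟩

lemma sesProp_image_ι {h : X ⟶ Y} {g : Y ⟶ Z} [Epi g] (hex : exactProp h g) :
    sesProp (image.ι h) g :=
  sesProp_of_exactProp ((exactProp_epi_comp_iff (factorThruImage h) _ _).1 (by rwa [image.fac]))

lemma exists_sesProp_comp_eq {K P S N : A} {f₃ : K ⟶ P} {h : P ⟶ Y} {f₁ : S ⟶ Y}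
    {g₁ : Y ⟶ N} [Mono f₃] (hf₃ : exactProp f₃ h) (h₁ : sesProp f₁ g₁) (hh : exactProp h g₁) :
    ∃ g₃ : P ⟶ S, sesProp f₃ g₃ ∧ g₃ ≫ f₁ = h := by
  have := h₁.epi
  obtain ⟨e, he⟩ := (sesProp_image_ι hh).exists_iso_left h₁
  have hfac : (factorThruImage h ≫ e.hom) ≫ f₁ = h := by simp [he]
  have := h₁.mono
  refine ⟨factorThruImage h ≫ e.hom, sesProp_of_exactProp ?_, hfac⟩
  rwa [← exactProp_comp_mono_iff _ _ f₁, hfac]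

lemma exactProp_comp_comp_of_sesProp {X₁ X₂ X₃ X₄ X₅ X₆ X₇ : A} {f₁ : X₁ ⟶ X₂} {g₁ : X₂ ⟶ X₃}
    {f₂ : X₃ ⟶ X₄} {g₂ : X₄ ⟶ X₅} {f₃ : X₅ ⟶ X₆} {g₃ : X₆ ⟶ X₇} (h₁ : sesProp f₁ g₁)
    (h₂ : sesProp f₂ g₂) (h₃ : sesProp f₃ g₃) : exactProp (g₁ ≫ f₂) (g₂ ≫ f₃) := by
  have := h₁.epi
  have := h₃.mono
  exact (exactProp_epi_comp_comp_mono_iff _ _ _ _).2 h₂.exactProp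

end ShortExact

lemma card_eq_card_range_mul_card {T B K : Type*} (π : T → B) (act : T → K → T)
    (h_act : ∀ x k, π (act x k) = π x) (h_fiber : ∀ x y, π x = π y → ∃ k, act x k = y)
    (h_free : ∀ x, Function.Injective (act x)) :
    Nat.card T = Nat.card (Set.range π) * Nat.card K := by
  let sec : Set.range π → T := fun b => b.2.choose
  have hsec : ∀ b, π (sec b) = b := fun b => b.2.choose_spec
  rw [← Nat.card_prod]
  refine (Nat.card_congr (Equiv.ofBijective (fun q : Set.range π × K => act (sec q.1) q.2)
    ⟨?_, fun y => ?_⟩)).symm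
  · rintro ⟨b, k⟩ ⟨b', k'⟩ h
    have hb : b = b' := by
      have := congrArg π h
      rwa [h_act, h_act, hsec, hsec, Subtype.coe_inj] at this
    subst hb
    exact Prod.ext rfl (h_free _ h)
  · obtain ⟨k, hk⟩ := h_fiber (sec ⟨π y, y, rfl⟩) y (hsec _)
    exact ⟨(⟨π y, y, rfl⟩, k), hk⟩

lemma prod_mul_apply_add {G M : Type*} [AddGroup G] [Fintype G] [CommMonoid M] (f g : G → M)
    (c : G) : ∏ i, f i * g (i + c) = ∏ i, f i * g i := by
  rw [Finset.prod_mul_distrib, Finset.prod_mul_distrib,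
    Fintype.prod_equiv (Equiv.addRight c) (fun i => g (i + c)) g fun _ => rfl]

lemma autCard_pos {C : Type*} [Category C] (Y : C) [Finite (Y ⟶ Y)] : 0 < autCard Y := by
  have : Finite (Aut Y) := Finite.of_injective (fun a : Aut Y => a.hom) fun _ _ h => Iso.ext h
  exact Nat.card_pos

def ShortExactPairs (B C Z : A) : Type := {p : (B ⟶ C) × (C ⟶ Z) // sesProp p.1 p.2}

namespace ShortExactPairs

variable {B C Z : A}

def subobject (p : ShortExactPairs B C Z) : Subobject C :=
  have := p.2.mono
  Subobject.mk p.1.1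

def twist (p : ShortExactPairs B C Z) (a : (B ≅ B) × (Z ≅ Z)) : ShortExactPairs B C Z :=
  ⟨(a.1.hom ≫ p.1.1, p.1.2 ≫ a.2.hom), (p.2.iso_comp a.1).comp_iso a.2⟩

lemma subobject_twist (p : ShortExactPairs B C Z) (a : (B ≅ B) × (Z ≅ Z)) :
    (p.twist a).subobject = p.subobject := by
  have := p.2.mono
  have := (p.twist a).2.mono
  exact Subobject.mk_eq_mk_of_comm _ _ a.1 rfl

lemma exists_twist_eq (p q : ShortExactPairs B C Z) (h : p.subobject = q.subobject) :
    ∃ a, p.twist a = q := by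
  obtain ⟨⟨f, g⟩, hp⟩ := p
  obtain ⟨⟨f', g'⟩, hq⟩ := q
  have := hp.mono
  have := hq.mono
  let α := Subobject.isoOfMkEqMk f' f h.symm
  have hα : α.hom ≫ f = f' := Subobject.ofMkLEMk_comp _
  obtain ⟨β, hβ⟩ := hp.exists_iso_right (by simpa [← hα] using hq.iso_comp α.symm)
  exact ⟨(α, β), Subtype.ext (Prod.ext hα hβ.symm)⟩

lemma twist_injective (p : ShortExactPairs B C Z) : Function.Injective p.twist := by
  have := p.2.mono
  have := p.2.epi
  rintro ⟨α, β⟩ ⟨α', β'⟩ h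
  have hf := congrArg (fun q : ShortExactPairs B C Z => q.1.1) h
  have hg := congrArg (fun q : ShortExactPairs B C Z => q.1.2) h
  simp only [twist, cancel_mono, cancel_epi] at hf hg
  exact Prod.ext (Iso.ext hf) (Iso.ext hg)

lemma range_subobject : Set.range (subobject (B := B) (C := C) (Z := Z)) =
    {s : Subobject C | Nonempty ((s : A) ≅ B) ∧ Nonempty (cokernel s.arrow ≅ Z)} := by
  ext s
  constructor
  · rintro ⟨⟨⟨f, g⟩, hp⟩, rfl⟩
    have := hp.mono
    obtain ⟨e, -⟩ := (sesProp_cokernel (Subobject.mk f).arrow).exists_iso_right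
      (by simpa using hp.iso_comp (Subobject.underlyingIso f))
    exact ⟨⟨Subobject.underlyingIso f⟩, ⟨e⟩⟩
  · rintro ⟨⟨e⟩, ⟨e'⟩⟩
    exact ⟨⟨(e.inv ≫ s.arrow, cokernel.π s.arrow ≫ e'.hom),
      ((sesProp_cokernel s.arrow).iso_comp e.symm).comp_iso e'⟩,
      Subobject.mk_eq_of_comm _ e.symm rfl⟩

lemma card_eq (B C Z : A) :
    Nat.card (ShortExactPairs B C Z) = hall Z B C * autCard B * autCard Z := by
  rw [card_eq_card_range_mul_card subobject twist subobject_twist exists_twist_eq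
    twist_injective, range_subobject, Nat.card_prod, mul_assoc]
  rfl

end ShortExactPairs

attribute [ext] TripleSES

section Periodic

variable {A1 A2 X S M N : ZMod t → A}

def tripleSESEquiv (i : ZMod t) :
    TripleSES A1 A2 X S M N i ≃ ShortExactPairs (S i) (A2 i) (N i) ×
      ShortExactPairs (N i) (X i) (M i) × ShortExactPairs (M i) (A1 i) (S (i + 1)) where
  toFun p := ⟨⟨(p.f1, p.g1), p.ses1⟩, ⟨(p.f2, p.g2), p.ses2⟩, ⟨(p.f3, p.g3), p.ses3⟩⟩
  invFun q := ⟨q.1.1.1, q.1.1.2, q.2.1.1.1, q.2.1.1.2, q.2.2.1.1, q.2.2.1.2, q.1.2, q.2.1.2,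
    q.2.2.2⟩
  left_inv _ := rfl
  right_inv _ := rfl

def TT.twist (p : TT A1 A2 X S M N) (a : ∀ i, (M i ≅ M i) × (N i ≅ N i) × (S i ≅ S i)) :
    TT A1 A2 X S M N := fun i =>
  { f1 := (a i).2.2.inv ≫ (p i).f1
    g1 := (p i).g1 ≫ (a i).2.1.hom
    f2 := (a i).2.1.inv ≫ (p i).f2
    g2 := (p i).g2 ≫ (a i).1.hom
    f3 := (a i).1.inv ≫ (p i).f3
    g3 := (p i).g3 ≫ (a (i + 1)).2.2.hom
    ses1 := ((p i).ses1.iso_comp (a i).2.2.symm).comp_iso (a i).2.1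
    ses2 := ((p i).ses2.iso_comp (a i).2.1.symm).comp_iso (a i).1
    ses3 := ((p i).ses3.iso_comp (a i).1.symm).comp_iso (a (i + 1)).2.2 }

lemma phi_twist (p : TT A1 A2 X S M N) (a : ∀ i, (M i ≅ M i) × (N i ≅ N i) × (S i ≅ S i)) :
    Phi A1 A2 X S M N (p.twist a) = Phi A1 A2 X S M N p := by
  funext i
  simp only [Phi, TT.twist, Category.assoc, Iso.hom_inv_id_assoc]

lemma TT.twist_injective (p : TT A1 A2 X S M N) : Function.Injective p.twist := by
  intro a a' h
  funext i
  have := (p i).ses1.mono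
  have := (p i).ses2.mono
  have := (p i).ses3.mono
  have h1 := congrArg (fun q : TT A1 A2 X S M N => (q i).f1) h
  have h2 := congrArg (fun q : TT A1 A2 X S M N => (q i).f2) h
  have h3 := congrArg (fun q : TT A1 A2 X S M N => (q i).f3) h
  simp only [TT.twist, cancel_mono, Iso.inv_eq_inv] at h1 h2 h3
  exact Prod.ext (Iso.ext h3) (Prod.ext (Iso.ext h2) (Iso.ext h1))

lemma exists_twist_eq_of_phi_eq (p p' : TT A1 A2 X S M N)
    (h : Phi A1 A2 X S M N p = Phi A1 A2 X S M N p') : ∃ a, p.twist a = p' := by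
  have hν : ∀ i, ∃ ν : N i ≅ N i, (p' i).g1 = (p i).g1 ≫ ν.hom ∧ (p' i).f2 = ν.inv ≫ (p i).f2 :=
    fun i => by
      have := (p i).ses1.epi; have := (p' i).ses1.epi
      have := (p i).ses2.mono; have := (p' i).ses2.mono
      exact exists_iso_of_epi_comp_mono_eq (congrArg (fun r => (r i).m) h)
  have hμ : ∀ i, ∃ μ : M i ≅ M i, (p' i).g2 = (p i).g2 ≫ μ.hom ∧ (p' i).f3 = μ.inv ≫ (p i).f3 :=
    fun i => by
      have := (p i).ses2.epi; have := (p' i).ses2.epi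
      have := (p i).ses3.mono; have := (p' i).ses3.mono
      exact exists_iso_of_epi_comp_mono_eq (congrArg (fun r => (r i).n) h)
  choose ν hg1 hf2 using hν
  choose μ hg2 hf3 using hμ
  have hσ : ∀ i, ∃ σ : S i ≅ S i, (p' i).f1 = σ.inv ≫ (p i).f1 := fun i =>
    (p i).ses1.exists_iso_left (by simpa [hg1] using (p' i).ses1.comp_iso (ν i).symm)
  choose σ hf1 using hσ
  have hg3 : ∀ i, (p' i).g3 = (p i).g3 ≫ (σ (i + 1)).hom := fun i => by
    have := (p (i + 1)).ses1.mono
    have hh := congrArg (fun r => (r i).h) h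
    simp only [Phi, hf1, ← Category.assoc, cancel_mono] at hh
    simp [hh]
  exact ⟨fun i => (μ i, ν i, σ i), funext fun i => TripleSES.ext (hf1 i).symm (hg1 i).symm
    (hf2 i).symm (hg2 i).symm (hf3 i).symm (hg3 i).symm⟩

lemma phi_mem_gSet (p : TT A1 A2 X S M N) : Phi A1 A2 X S M N p ∈ GSet A1 A2 X S M N :=
  ⟨fun i => ⟨exactProp_comp_comp_of_sesProp (p i).ses1 (p i).ses2 (p i).ses3,
      exactProp_comp_comp_of_sesProp (p i).ses2 (p i).ses3 (p (i + 1)).ses1,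
      exactProp_comp_comp_of_sesProp (p i).ses3 (p (i + 1)).ses1 (p (i + 1)).ses2⟩,
    fun i => nonempty_image_kernel_cokernel_iso (p i).ses3 (p (i + 1)).ses1⟩

lemma exists_phi_eq_of_mem_gSet {r : Raw A1 A2 X} (hr : r ∈ GSet A1 A2 X S M N) :
    ∃ p, Phi A1 A2 X S M N p = r := by
  obtain ⟨hexact, hiso⟩ := hr
  have hN : ∀ j, ∃ (f₁ : S j ⟶ A2 j) (g₁ : A2 j ⟶ N j) (f₂ : N j ⟶ X j),
      sesProp f₁ g₁ ∧ Mono f₂ ∧ g₁ ≫ f₂ = (r j).m := by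
    intro j
    -- `S j` and `N j` are tied to the complex only through `h^{j-1}`
    obtain ⟨i, rfl⟩ : ∃ i, j = i + 1 := ⟨j - 1, (sub_add_cancel j 1).symm⟩
    obtain ⟨⟨σ⟩, -, ⟨ν⟩⟩ := hiso i
    obtain ⟨g₁, f₂, _, hf₂, hg₁, hm⟩ := exists_factorization_through_cokernel (hexact i).2.2 ν
    exact ⟨σ.inv ≫ image.ι _, g₁, f₂, (sesProp_image_ι hg₁).iso_comp σ.symm, hf₂, hm⟩
  have hM : ∀ i, ∃ (g₂ : X i ⟶ M i) (f₃ : M i ⟶ A1 i),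
      Epi g₂ ∧ Mono f₃ ∧ exactProp f₃ (r i).h ∧ g₂ ≫ f₃ = (r i).n := fun i =>
    exists_factorization_through_kernel (hexact i).2.1 (hiso i).2.1.some
  choose f₁ g₁ f₂ hses₁ hf₂ hm using hN
  choose g₂ f₃ hg₂ hf₃ hf₃h hn using hM
  have hS : ∀ i, ∃ g₃ : A1 i ⟶ S (i + 1), sesProp (f₃ i) g₃ ∧ g₃ ≫ f₁ (i + 1) = (r i).h :=
    fun i => exists_sesProp_comp_eq (hf₃h i) (hses₁ (i + 1))
      ((exactProp_comp_mono_iff _ _ (f₂ (i + 1))).1 (hm (i + 1) ▸ (hexact i).2.2))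
  choose g₃ hses₃ hh using hS
  refine ⟨fun i => ⟨f₁ i, g₁ i, f₂ i, g₂ i, f₃ i, g₃ i, hses₁ i, ?_, hses₃ i⟩, ?_⟩
  · have := (hses₁ i).epi
    exact sesProp_of_exactProp ((exactProp_epi_comp_comp_mono_iff _ _ _ _).1
      (hm i ▸ hn i ▸ (hexact i).1))
  · funext i
    simp only [Phi, hm, hn, hh]

lemma range_phi (A1 A2 X S M N : ZMod t → A) :
    Set.range (Phi A1 A2 X S M N) = GSet A1 A2 X S M N :=
  Set.ext fun _ => ⟨fun ⟨p, hp⟩ => hp ▸ phi_mem_gSet p, exists_phi_eq_of_mem_gSet⟩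

lemma card_TT [NeZero t] (A1 A2 X S M N : ZMod t → A) :
    Nat.card (TT A1 A2 X S M N) = ∏ i : ZMod t,
      hall (S (i + 1)) (M i) (A1 i) * hall (M i) (N i) (X i) * hall (N i) (S i) (A2 i) *
        autCard (M i) ^ 2 * autCard (N i) ^ 2 * autCard (S i) ^ 2 := by
  calc Nat.card (TT A1 A2 X S M N)
      = ∏ i : ZMod t, Nat.card (TripleSES A1 A2 X S M N i) := Nat.card_pi
    _ = ∏ i : ZMod t, (hall (S (i + 1)) (M i) (A1 i) * hall (M i) (N i) (X i) *
          hall (N i) (S i) (A2 i) * autCard (M i) ^ 2 * autCard (N i) ^ 2 * autCard (S i)) *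
          autCard (S (i + 1)) := by
      refine Finset.prod_congr rfl fun i _ => ?_
      rw [Nat.card_congr (tripleSESEquiv i), Nat.card_prod, Nat.card_prod,
        ShortExactPairs.card_eq, ShortExactPairs.card_eq, ShortExactPairs.card_eq]
      ring
    _ = _ := by
      rw [prod_mul_apply_add _ (fun i => autCard (S i))]
      exact Finset.prod_congr rfl fun i _ => by ring

end Periodic

theorem counting_triples_of_short_exact_sequences_general
    (A : Type) [SmallCategory A] [Abelian A]
    (hfinHom : ∀ X Y : A, Finite (X ⟶ Y))
    (t : ℕ) [NeZero t]
    (A1 A2 X S M N : ZMod t → A) :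
    -- `Φ` is a surjection from `T` onto `G_{M^•,N^•}`
    Set.range (Phi A1 A2 X S M N) = GSet A1 A2 X S M N
    -- `|T| = ∏ᵢ g^{A₁^i}_{S^{i+1} M^i} g^{X^i}_{M^i N^i} g^{A₂^i}_{N^i S^i} a²_{M^i} a²_{N^i} a²_{S^i}`
    ∧ Nat.card (TT A1 A2 X S M N)
        = ∏ i : ZMod t,
            hall (S (i + 1)) (M i) (A1 i) * hall (M i) (N i) (X i) *
              hall (N i) (S i) (A2 i) *
              (autCard (M i)) ^ 2 * (autCard (N i)) ^ 2 * (autCard (S i)) ^ 2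
    -- `|G_{M^•,N^•}| = ∏ᵢ g^{A₁^i}_{S^{i+1} M^i} g^{X^i}_{M^i N^i} g^{A₂^i}_{N^i S^i} a_{M^i} a_{N^i} a_{S^i}`
    ∧ Nat.card (GSet A1 A2 X S M N)
        = ∏ i : ZMod t,
            hall (S (i + 1)) (M i) (A1 i) * hall (M i) (N i) (X i) *
              hall (N i) (S i) (A2 i) *
              autCard (M i) * autCard (N i) * autCard (S i) := by
  have hcard := card_eq_card_range_mul_card (Phi A1 A2 X S M N) TT.twist phi_twist
    exists_twist_eq_of_phi_eq TT.twist_injective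
  have hstab : Nat.card (∀ i, (M i ≅ M i) × (N i ≅ N i) × (S i ≅ S i))
      = ∏ i, autCard (M i) * autCard (N i) * autCard (S i) := by
    rw [Nat.card_pi]
    exact Finset.prod_congr rfl fun i _ => by rw [Nat.card_prod, Nat.card_prod, mul_assoc]; rfl
  have hpos : 0 < ∏ i, autCard (M i) * autCard (N i) * autCard (S i) :=
    Finset.prod_pos fun i _ => by
      have := hfinHom
      exact Nat.mul_pos (Nat.mul_pos (autCard_pos _) (autCard_pos _)) (autCard_pos _)
  rw [range_phi, card_TT, hstab] at hcard
  refine ⟨range_phi A1 A2 X S M N, card_TT A1 A2 X S M N, Nat.eq_of_mul_eq_mul_right hpos ?_⟩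
  rw [← Finset.prod_mul_distrib, ← hcard]
  exact Finset.prod_congr rfl fun i _ => by ring

theorem counting_triples_of_short_exact_sequences
    (k : Type) [Field k] [Fintype k]
    (A : Type) [SmallCategory A] [Abelian A] [CategoryTheory.Linear k A]
    [HasExt.{0} A]
    (hfinHom : ∀ X Y : A, Finite (X ⟶ Y))
    (hfinExt : ∀ X Y : A, Finite (Abelian.Ext X Y 1))
    (t : ℕ) [NeZero t] (ht : Odd t)
    (A1 A2 X S M N : ZMod t → A) :
    -- `Φ` is a surjection from `T` onto `G_{M^•,N^•}`
    Set.range (Phi A1 A2 X S M N) = GSet A1 A2 X S M N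
    -- `|T| = ∏ᵢ g^{A₁^i}_{S^{i+1} M^i} g^{X^i}_{M^i N^i} g^{A₂^i}_{N^i S^i} a²_{M^i} a²_{N^i} a²_{S^i}`
    ∧ Nat.card (TT A1 A2 X S M N)
        = ∏ i : ZMod t,
            hall (S (i + 1)) (M i) (A1 i) * hall (M i) (N i) (X i) *
              hall (N i) (S i) (A2 i) *
              (autCard (M i)) ^ 2 * (autCard (N i)) ^ 2 * (autCard (S i)) ^ 2
    -- `|G_{M^•,N^•}| = ∏ᵢ g^{A₁^i}_{S^{i+1} M^i} g^{X^i}_{M^i N^i} g^{A₂^i}_{N^i S^i} a_{M^i} a_{N^i} a_{S^i}`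
    ∧ Nat.card (GSet A1 A2 X S M N)
        = ∏ i : ZMod t,
            hall (S (i + 1)) (M i) (A1 i) * hall (M i) (N i) (X i) *
              hall (N i) (S i) (A2 i) *
              autCard (M i) * autCard (N i) * autCard (S i) :=
  counting_triples_of_short_exact_sequences_general A hfinHom t A1 A2 X S M N

end GreenDH
end
end
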